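/- Let ν be a multiplicative arithmetic function whose support has positive asymptotic density. Set C'_ν = (6/π²)·∏_{p ∉ supp(ν)} (1 + 1/p)^{-1} (a positive real since ∑_{p∉supp(ν)} 1/p < ∞). Then for every pair (f, g) of multiplicative arithmetic functions with g = f * ν, one has d(supp(g)) ≥ C'_ν / (∑_{n ∈ supp(f)} 1/n), with the convention C'_ν/∞ = 0. -/

import Mathlib

/-!
Let `B` be the set of primes at which `ν` vanishes or `f` does not. For squarefree `n` with no
prime factor in `B`, `g n = ∏_{p ∣ n} (f p + ν p) = ∏_{p ∣ n} ν p ≠ 0`, so `supp g` contains these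
numbers, whose density is `(6/π²) ∏_{p ∈ B} (1 + 1/p)⁻¹` as soon as `∑_{p ∈ B} 1/p < ∞`: sieving
by `p` (`p ∈ B`) or `p²` (`p ∉ B`) for the primes below `z` gives a periodic set whose density is
computed exactly by the Chinese remainder theorem, and the primes `≥ z` remove at most a tail of
`∑ 1/p + ∑ 1/p²`.

Both halves of `B` are thin. If `ν p = 0`, multiplicativity forces `p² ∣ n` whenever `p ∣ n` and
`n ∈ supp ν`; these conditions have density `∏ (1 - 1/p + 1/p²) ≤ exp (-∑ 1/(2p))`, which is
bounded below by `d(supp ν) > 0`. If `f p ≠ 0` on a finite set `T` of primes, all squarefree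
products of elements of `T` lie in `supp f`, so `∏_{p ∈ T} (1 + 1/p) ≤ ∑_{n ∈ supp f} 1/n`; this
also gives `∏_{f p ≠ 0} (1 + 1/p)⁻¹ ≥ (∑_{n ∈ supp f} 1/n)⁻¹`, and splitting the product over `B`
yields the bound.
-/

open Filter Topology ArithmeticFunction

/-- Number of elements of `A` in `[1, N]`. -/
noncomputable def cnt (A : Set ℕ) (N : ℕ) : ℕ := (A ∩ Set.Icc 1 N).ncard

/-- `A ⊆ ℕ` has asymptotic density `d`. -/
def HasDensity (A : Set ℕ) (d : ℝ) : Prop :=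
  Filter.Tendsto (fun N : ℕ => (cnt A N : ℝ) / N) Filter.atTop (nhds d)

/-- `A` is thin: the sum of the reciprocals of its elements converges. -/
def Thin (A : Set ℕ) : Prop := Summable (fun a : A => (1 : ℝ) / a)

open Finset Function

section Density

variable {A B : Set ℕ}

lemma cnt_eq_count (A : Set ℕ) [DecidablePred (· ∈ A)] (N : ℕ) :
    cnt A N = Nat.count (fun k => k + 1 ∈ A) N := by
  rw [Nat.count_eq_card_filter_range, cnt, ← Set.ncard_coe_finset]
  refine Set.ncard_congr (fun n _ => n - 1) ?_ ?_ ?_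
  · rintro n ⟨hA, h1, hN⟩
    simp only [coe_filter, mem_range, Set.mem_ofPred_eq]
    exact ⟨by omega, by rwa [Nat.sub_add_cancel h1]⟩
  · rintro a b ⟨-, ha, -⟩ ⟨-, hb, -⟩ h
    omega
  · intro k hk
    simp only [coe_filter, mem_range, Set.mem_ofPred_eq] at hk
    exact ⟨k + 1, ⟨hk.2, by omega, by omega⟩, rfl⟩

lemma cnt_eq_card (A : Set ℕ) [DecidablePred (· ∈ A)] (N : ℕ) :
    cnt A N = #{n ∈ Icc 1 N | n ∈ A} := by
  rw [cnt, ← Set.ncard_coe_finset]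
  congr 1
  ext n
  simp only [Set.mem_inter_iff, Set.mem_Icc, coe_filter, mem_Icc, Set.mem_ofPred_eq]
  tauto

lemma abs_cnt_sub_count_le_one (A : Set ℕ) [DecidablePred (· ∈ A)] (N : ℕ) :
    |(cnt A N : ℝ) - Nat.count (· ∈ A) N| ≤ 1 := by
  have h := Nat.count_succ' (p := (· ∈ A)) N
  rw [Nat.count_succ, ← cnt_eq_count] at h
  have h₁ : cnt A N ≤ Nat.count (· ∈ A) N + 1 := by split_ifs at h <;> omega
  have h₂ : Nat.count (· ∈ A) N ≤ cnt A N + 1 := by split_ifs at h <;> omega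
  have h₁' : (cnt A N : ℝ) ≤ Nat.count (· ∈ A) N + 1 := by exact_mod_cast h₁
  have h₂' : (Nat.count (· ∈ A) N : ℝ) ≤ cnt A N + 1 := by exact_mod_cast h₂
  exact abs_le.mpr ⟨by linarith, by linarith⟩

lemma cnt_mono (h : A ⊆ B) (N : ℕ) : cnt A N ≤ cnt B N :=
  Set.ncard_le_ncard (Set.inter_subset_inter_left _ h) ((Set.finite_Icc 1 N).inter_of_right B)

lemma HasDensity.nonneg {d : ℝ} (hA : HasDensity A d) : 0 ≤ d :=
  ge_of_tendsto' hA fun N => by positivity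

lemma HasDensity.le_add_of_cnt_le {a b ε : ℝ} (hA : HasDensity A a) (hB : HasDensity B b)
    (h : ∀ N, (cnt A N : ℝ) ≤ cnt B N + ε * N) : a ≤ b + ε := by
  refine le_of_tendsto_of_tendsto hA (hB.add_const ε) ?_
  filter_upwards [eventually_gt_atTop 0] with N hN
  rw [div_add' _ _ _ (by positivity), div_le_div_iff_of_pos_right (by positivity)]
  exact h N

lemma HasDensity.mono {a b : ℝ} (hA : HasDensity A a) (hB : HasDensity B b) (h : A ⊆ B) :
    a ≤ b := by
  simpa using hA.le_add_of_cnt_le hB (ε := 0) fun N => by simpa using cnt_mono h N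

lemma hasDensity_of_abs_count_sub_le [DecidablePred (· ∈ A)] {d C : ℝ}
    (h : ∀ N, |(Nat.count (· ∈ A) N : ℝ) - d * N| ≤ C) : HasDensity A d := by
  have hC : Tendsto (fun N : ℕ => (C + 1) / N) atTop (𝓝 0) :=
    tendsto_const_div_atTop_nhds_zero_nat _
  refine tendsto_iff_norm_sub_tendsto_zero.mpr (squeeze_zero' (by simp) ?_ hC)
  filter_upwards [eventually_gt_atTop 0] with N hN
  have hN' : (0 : ℝ) < N := by exact_mod_cast hN
  rw [Real.norm_eq_abs, le_div_iff₀ hN', ← abs_of_pos hN', ← abs_mul, abs_of_pos hN', sub_mul,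
    div_mul_cancel₀ _ hN'.ne']
  calc |(cnt A N : ℝ) - d * N|
      ≤ |(cnt A N : ℝ) - Nat.count (· ∈ A) N| + |(Nat.count (· ∈ A) N : ℝ) - d * N| :=
        abs_sub_le _ _ _
    _ ≤ C + 1 := by linarith [abs_cnt_sub_count_le_one A N, h N]

end Density

section Periodic

lemma Nat.count_mul_of_periodic {p : ℕ → Prop} [DecidablePred p] {M : ℕ} (hp : Periodic p M)
    (q : ℕ) : Nat.count p (q * M) = q * Nat.count p M := by
  induction q with
  | zero => simp
  | succ q ih =>
    have hshift : (fun k => p (q * M + k)) = p := funext fun k => by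
      rw [add_comm]; exact hp.nat_mul q k
    rw [add_mul, one_mul, Nat.count_add, ih]
    simp only [hshift]
    ring

lemma abs_count_sub_le_of_periodic {p : ℕ → Prop} [DecidablePred p] {M : ℕ} (hp : Periodic p M)
    (hM : 0 < M) (N : ℕ) :
    |(Nat.count p N : ℝ) - Nat.count p M / M * N| ≤ Nat.count p M := by
  set c := Nat.count p M
  have hlo : N / M * c ≤ Nat.count p N := by
    rw [← Nat.count_mul_of_periodic hp]; exact Nat.count_monotone p (Nat.div_mul_le_self N M)
  have hhi : Nat.count p N ≤ (N / M + 1) * c := by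
    rw [← Nat.count_mul_of_periodic hp, add_mul, one_mul]
    exact Nat.count_monotone p (Nat.lt_div_mul_add hM).le
  have hN : (N : ℝ) = (N / M : ℕ) * M + (N % M : ℕ) := by exact_mod_cast (Nat.div_add_mod' N M).symm
  have hM' : (0 : ℝ) < M := by exact_mod_cast hM
  have hr : ((N % M : ℕ) : ℝ) / M ≤ 1 :=
    (div_le_one hM').mpr (by exact_mod_cast (Nat.mod_lt N hM).le)
  have hlo' : ((N / M : ℕ) : ℝ) * c ≤ Nat.count p N := by exact_mod_cast hlo
  have hhi' : (Nat.count p N : ℝ) ≤ ((N / M : ℕ) + 1) * c := by exact_mod_cast hhi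
  have hsplit : (c : ℝ) / M * N = (N / M : ℕ) * c + (N % M : ℕ) / M * c := by
    rw [hN]; field_simp
  have hc : (0 : ℝ) ≤ (N % M : ℕ) / M * c := by positivity
  rw [hsplit, abs_le]
  constructor <;> nlinarith

lemma hasDensity_of_periodic {A : Set ℕ} [DecidablePred (· ∈ A)] {M : ℕ}
    (hA : Periodic (· ∈ A) M) (hM : 0 < M) : HasDensity A (Nat.count (· ∈ A) M / M) :=
  hasDensity_of_abs_count_sub_le (abs_count_sub_le_of_periodic hA hM)

lemma Nat.count_and_of_coprime {P Q : ℕ → Prop} [DecidablePred P] [DecidablePred Q] {a b : ℕ}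
    (hP : Periodic P a) (hQ : Periodic Q b) (hab : a.Coprime b) :
    Nat.count (fun n => P n ∧ Q n) (a * b) = Nat.count P a * Nat.count Q b := by
  rcases Nat.eq_zero_or_pos a with rfl | ha
  · simp
  rcases Nat.eq_zero_or_pos b with rfl | hb
  · simp
  simp only [Nat.count_eq_card_filter_range, ← card_product]
  have hcrt : ∀ r s, (Nat.chineseRemainder hab r s : ℕ) % a = r % a ∧
      (Nat.chineseRemainder hab r s : ℕ) % b = s % b := fun r s =>
    (Nat.chineseRemainder hab r s).2
  refine card_nbij' (fun n => (n % a, n % b)) (fun x => Nat.chineseRemainder hab x.1 x.2)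
    ?_ ?_ ?_ ?_
  · intro n hn
    simp only [coe_filter, mem_range, Set.mem_ofPred_eq, coe_product, Set.mem_prod] at hn ⊢
    rw [hP.map_mod_nat, hQ.map_mod_nat]
    exact ⟨⟨Nat.mod_lt _ ha, hn.2.1⟩, Nat.mod_lt _ hb, hn.2.2⟩
  · rintro ⟨r, s⟩ hx
    simp only [coe_filter, mem_range, Set.mem_ofPred_eq, coe_product, Set.mem_prod] at hx ⊢
    refine ⟨Nat.chineseRemainder_lt_mul hab r s ha.ne' hb.ne', ?_, ?_⟩
    · rw [← hP.map_mod_nat, (hcrt r s).1, Nat.mod_eq_of_lt hx.1.1]; exact hx.1.2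
    · rw [← hQ.map_mod_nat, (hcrt r s).2, Nat.mod_eq_of_lt hx.2.1]; exact hx.2.2
  · intro n hn
    simp only [coe_filter, mem_range, Set.mem_ofPred_eq] at hn
    exact (Nat.chineseRemainder_modEq_unique hab (Nat.mod_modEq n a).symm
      (Nat.mod_modEq n b).symm).symm.eq_of_lt_of_lt
      (Nat.chineseRemainder_lt_mul hab _ _ ha.ne' hb.ne') hn.1
  · rintro ⟨r, s⟩ hx
    simp only [coe_filter, mem_range, coe_product, Set.mem_prod] at hx
    simp only [(hcrt r s).1, (hcrt r s).2, Nat.mod_eq_of_lt hx.1.1, Nat.mod_eq_of_lt hx.2.1]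

lemma periodic_forall_mem_prod {ι : Type*} {m : ι → ℕ} {C : ι → ℕ → Prop}
    (hC : ∀ i, Periodic (C i) (m i)) (T : Finset ι) :
    Periodic (fun n => ∀ i ∈ T, C i n) (∏ i ∈ T, m i) := fun n => by
  refine propext (forall₂_congr fun i hi => ?_)
  obtain ⟨k, hk⟩ := Finset.dvd_prod_of_mem m hi
  rw [hk, mul_comm]
  exact eq_iff_iff.mp ((hC i).nat_mul k n)

lemma Nat.count_forall_mem_of_coprime {ι : Type*} [DecidableEq ι] (m : ι → ℕ)
    (C : ι → ℕ → Prop) [∀ i, DecidablePred (C i)] (hC : ∀ i, Periodic (C i) (m i))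
    (T : Finset ι) (hT : (T : Set ι).Pairwise (Nat.Coprime on m)) :
    Nat.count (fun n => ∀ i ∈ T, C i n) (∏ i ∈ T, m i) = ∏ i ∈ T, Nat.count (C i) (m i) := by
  induction T using Finset.induction_on with
  | empty => simp
  | @insert a s ha ih =>
    rw [coe_insert, Set.pairwise_insert_of_symm] at hT
    have hcop : (m a).Coprime (∏ i ∈ s, m i) :=
      Nat.Coprime.prod_right fun i hi => hT.2 i hi (by rintro rfl; exact ha hi)
    simp only [forall_mem_insert, prod_insert ha]
    rw [Nat.count_and_of_coprime (hC a) (periodic_forall_mem_prod hC s) hcop, ih hT.1]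

lemma hasDensity_forall_mem_of_coprime {ι : Type*} [DecidableEq ι] (m : ι → ℕ)
    (C : ι → ℕ → Prop) [∀ i, DecidablePred (C i)] (hC : ∀ i, Periodic (C i) (m i))
    (T : Finset ι) (hm : ∀ i ∈ T, 0 < m i) (hT : (T : Set ι).Pairwise (Nat.Coprime on m)) :
    HasDensity {n | ∀ i ∈ T, C i n} (∏ i ∈ T, (Nat.count (C i) (m i) : ℝ) / m i) := by
  convert hasDensity_of_periodic (A := {n | ∀ i ∈ T, C i n}) (periodic_forall_mem_prod hC T)
    (prod_pos hm) using 1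
  rw [prod_div_distrib, ← Nat.cast_prod, ← Nat.cast_prod,
    ← Nat.count_forall_mem_of_coprime m C hC T hT]
  congr

end Periodic

section LocalFactors

lemma periodic_not_dvd {d m : ℕ} (hdm : d ∣ m) : Periodic (fun n => ¬ d ∣ n) m := fun n => by
  simp only [Nat.dvd_add_left hdm]

lemma Nat.count_not_dvd_self (d : ℕ) : Nat.count (fun n => ¬ d ∣ n) d = d - 1 := by
  rcases d with _ | d
  · simp
  rw [Nat.count_succ', Nat.count_of_forall fun k hk => Nat.not_dvd_of_pos_of_lt k.succ_pos
    (by omega)]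
  simp

lemma Nat.count_not_dvd_div {d m : ℕ} (hm : 0 < m) (hdm : d ∣ m) :
    (Nat.count (fun n => ¬ d ∣ n) m : ℝ) / m = 1 - 1 / d := by
  obtain ⟨k, rfl⟩ := hdm
  have hd : 0 < d := Nat.pos_of_mul_pos_right hm
  have hk : 0 < k := Nat.pos_of_mul_pos_left hm
  rw [mul_comm, Nat.count_mul_of_periodic (periodic_not_dvd dvd_rfl), Nat.count_not_dvd_self,
    Nat.cast_mul, Nat.cast_sub hd, Nat.cast_mul]
  field_simp
  ring

lemma Nat.count_dvd_imp_sq_dvd {p : ℕ} (hp : 0 < p) :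
    Nat.count (fun n => p ∣ n → p ^ 2 ∣ n) (p ^ 2) = Nat.count (fun n => ¬ p ∣ n) (p ^ 2) + 1 := by
  obtain ⟨k, hk⟩ : ∃ k, p ^ 2 = k + 1 := Nat.exists_eq_succ_of_ne_zero (by positivity)
  have hlt : ∀ j < k, ¬ k + 1 ∣ j + 1 := fun j hj => Nat.not_dvd_of_pos_of_lt j.succ_pos (by omega)
  rw [hk, Nat.count_succ', Nat.count_succ']
  simp only [dvd_zero, imp_self, if_true, not_true_eq_false, if_false, add_zero]
  congr 1
  exact le_antisymm (Nat.count_mono_left fun j hj h hpj => hlt j hj (h hpj))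
    (Nat.count_mono_left fun j _ h hpj => absurd hpj h)

lemma count_dvd_imp_sq_dvd_div_le_exp {p : ℕ} (hp : 2 ≤ p) :
    (Nat.count (fun n => p ∣ n → p ^ 2 ∣ n) (p ^ 2) : ℝ) / (p ^ 2 : ℕ) ≤
      Real.exp (-(1 / (2 * p))) := by
  have hp' : (2 : ℝ) ≤ p := by exact_mod_cast hp
  rw [Nat.count_dvd_imp_sq_dvd (by omega), Nat.cast_add, add_div,
    Nat.count_not_dvd_div (by positivity) (dvd_pow_self p two_ne_zero)]
  push_cast
  calc 1 - 1 / (p : ℝ) + 1 / (p : ℝ) ^ 2 ≤ -(1 / (2 * p)) + 1 := by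
        rw [← sub_nonneg]
        field_simp
        nlinarith
    _ ≤ Real.exp (-(1 / (2 * p))) := Real.add_one_le_exp _

end LocalFactors

section Thin

variable {A B : Set ℕ}

lemma Thin.mono (hB : Thin B) (h : A ⊆ B) : Thin A :=
  show Summable ((fun b : B => (1 : ℝ) / b) ∘ Set.inclusion h) from
    hB.comp_injective (Set.inclusion_injective h)

lemma thin_iff_summable_indicator : Thin A ↔ Summable (A.indicator fun n : ℕ => (1 : ℝ) / n) :=
  summable_subtype_iff_indicator (s := A) (f := fun n : ℕ => (1 : ℝ) / n)

lemma Thin.union (hA : Thin A) (hB : Thin B) : Thin (A ∪ B) := by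
  rw [thin_iff_summable_indicator] at *
  refine (hA.add hB).of_nonneg_of_le (Set.indicator_nonneg fun _ _ => by positivity) fun n => ?_
  have h0 : (0 : ℝ) ≤ 1 / n := by positivity
  classical
  simp only [Set.indicator_apply, Set.mem_union]
  split_ifs <;> first | linarith | tauto

lemma Thin.sum_le_tsum (hA : Thin A) {U : Finset ℕ} (hU : ↑U ⊆ A) :
    ∑ n ∈ U, (1 : ℝ) / n ≤ ∑' a : A, (1 : ℝ) / a := by
  rw [_root_.tsum_subtype A (fun n : ℕ => (1 : ℝ) / n)]
  calc ∑ n ∈ U, (1 : ℝ) / n = ∑ n ∈ U, A.indicator (fun n : ℕ => (1 : ℝ) / n) n :=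
        sum_congr rfl fun n hn => (Set.indicator_of_mem (hU hn) (fun n : ℕ => (1 : ℝ) / n)).symm
    _ ≤ _ := (thin_iff_summable_indicator.mp hA).sum_le_tsum U
        fun n _ => Set.indicator_nonneg (fun _ _ => by positivity) n

lemma thin_of_sum_le {C : ℝ} (h : ∀ U : Finset ℕ, ↑U ⊆ A → ∑ n ∈ U, (1 : ℝ) / n ≤ C) :
    Thin A := by
  refine summable_of_sum_le (c := C) (fun _ => by positivity) fun u => ?_
  have := h (u.map (Embedding.subtype _)) (by
    intro n hn
    obtain ⟨a, -, rfl⟩ := mem_map.mp hn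
    exact a.2)
  rwa [sum_map] at this

lemma Thin.multipliable_inv_one_add (hA : Thin A) :
    Multipliable fun a : A => (1 + 1 / (a : ℝ))⁻¹ := by
  have hbound : ∀ a : A, ‖(1 + 1 / (a : ℝ))⁻¹ - 1‖ ≤ 1 / (a : ℝ) := fun a => by
    set x := 1 / (a : ℝ)
    have hx : 0 ≤ x := by positivity
    have hsub : 1 - (1 + x)⁻¹ = x / (1 + x) := by field_simp; ring
    rw [Real.norm_eq_abs, abs_sub_comm, hsub, abs_of_nonneg (by positivity)]
    exact div_le_self hx (le_add_of_nonneg_right hx)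
  simpa using Real.multipliable_one_add_of_summable (hA.of_norm_bounded hbound)

end Thin

lemma pairwise_coprime_sq_of_prime {s : Set ℕ} (hs : ∀ p ∈ s, p.Prime) :
    s.Pairwise (Nat.Coprime on fun p => p ^ 2) := fun a ha b hb hab =>
  ((Nat.coprime_primes (hs a ha) (hs b hb)).mpr hab).pow 2 2

section SupportDensity

variable {R : Type*} [MonoidWithZero R] {ν : ArithmeticFunction R}

lemma ArithmeticFunction.IsMultiplicative.apply_eq_zero_of_not_sq_dvd (hν : ν.IsMultiplicative)
    {p n : ℕ} (hp : p.Prime) (hνp : ν p = 0) (hpn : p ∣ n) (hpn2 : ¬ p ^ 2 ∣ n) : ν n = 0 := by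
  obtain ⟨k, rfl⟩ := hpn
  have hcop : p.Coprime k := (Nat.Prime.coprime_iff_not_dvd hp).mpr fun hk =>
    hpn2 (by rw [pow_two]; exact mul_dvd_mul_left p hk)
  rw [hν.map_mul_of_coprime hcop, hνp, zero_mul]

lemma sum_inv_le_two_mul_log_inv (hν : ν.IsMultiplicative) {d : ℝ} (hd : 0 < d)
    (hD : HasDensity {n | ν n ≠ 0} d) {T : Finset ℕ} (hT : ∀ p ∈ T, p.Prime ∧ ν p = 0) :
    ∑ p ∈ T, (1 : ℝ) / p ≤ 2 * Real.log d⁻¹ := by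
  classical
  have hdens := hasDensity_forall_mem_of_coprime (fun p => p ^ 2)
    (fun p n => p ∣ n → p ^ 2 ∣ n)
    (fun p n => by
      simp only [Nat.dvd_add_left (dvd_pow_self p two_ne_zero), Nat.dvd_add_left dvd_rfl])
    T (fun p hp => pow_pos (hT p hp).1.pos 2) (pairwise_coprime_sq_of_prime fun p hp => (hT p hp).1)
  have hsupp : {n | ν n ≠ 0} ⊆ {n | ∀ p ∈ T, p ∣ n → p ^ 2 ∣ n} := fun n hn p hp hpn => by
    by_contra h
    exact hn (hν.apply_eq_zero_of_not_sq_dvd (hT p hp).1 (hT p hp).2 hpn h)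
  have hle : d ≤ Real.exp (-∑ p ∈ T, 1 / (2 * (p : ℝ))) := calc
    d ≤ _ := hD.mono hdens hsupp
    _ ≤ ∏ p ∈ T, Real.exp (-(1 / (2 * (p : ℝ)))) :=
      prod_le_prod (fun _ _ => by positivity)
        fun p hp => count_dvd_imp_sq_dvd_div_le_exp (hT p hp).1.two_le
    _ = _ := by rw [← Real.exp_sum, sum_neg_distrib]
  have hlog := Real.log_le_log hd hle
  rw [Real.log_exp] at hlog
  have htwo : ∑ p ∈ T, (1 : ℝ) / p = 2 * ∑ p ∈ T, 1 / (2 * (p : ℝ)) := by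
    rw [mul_sum]; exact sum_congr rfl fun p _ => by ring
  rw [Real.log_inv, htwo]
  linarith

theorem thin_setOf_prime_apply_eq_zero (hν : ν.IsMultiplicative) {d : ℝ} (hd : 0 < d)
    (hD : HasDensity {n | ν n ≠ 0} d) : Thin {p | p.Prime ∧ ν p = 0} :=
  thin_of_sum_le fun _ hU => sum_inv_le_two_mul_log_inv hν hd hD fun _ hp => hU hp

end SupportDensity

section SupportReciprocals

variable {R : Type*} [CommMonoidWithZero R] [NoZeroDivisors R] [Nontrivial R]
  {f : ArithmeticFunction R}

lemma prod_one_add_inv_le_tsum (hf : f.IsMultiplicative) (hS : Thin {n | f n ≠ 0})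
    {T : Finset ℕ} (hT : ∀ p ∈ T, p.Prime ∧ f p ≠ 0) :
    ∏ p ∈ T, (1 + 1 / (p : ℝ)) ≤ ∑' n : {n | f n ≠ 0}, (1 : ℝ) / n := by
  have hprime : ∀ t ∈ T.powerset, ∀ p ∈ t, p.Prime := fun t ht p hp =>
    (hT p (mem_powerset.mp ht hp)).1
  have hinj : Set.InjOn (fun t : Finset ℕ => ∏ p ∈ t, p) T.powerset := fun t₁ ht₁ t₂ ht₂ h => by
    rw [← Nat.primeFactors_prod (hprime t₁ ht₁), ← Nat.primeFactors_prod (hprime t₂ ht₂)]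
    exact congrArg Nat.primeFactors h
  have hsupp : ↑(T.powerset.image fun t => ∏ p ∈ t, p) ⊆ {n | f n ≠ 0} := by
    intro n hn
    obtain ⟨t, ht, rfl⟩ := mem_image.mp hn
    rw [Set.mem_ofPred_eq, hf.map_prod_of_prime t (hprime t ht), prod_ne_zero_iff]
    exact fun p hp => (hT p (mem_powerset.mp ht hp)).2
  calc ∏ p ∈ T, (1 + 1 / (p : ℝ)) = ∑ t ∈ T.powerset, ∏ p ∈ t, 1 / (p : ℝ) := prod_one_add T
    _ = ∑ n ∈ T.powerset.image (fun t => ∏ p ∈ t, p), 1 / (n : ℝ) := by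
        rw [sum_image hinj]
        exact sum_congr rfl fun t _ => by push_cast; rw [prod_div_distrib, prod_const_one]
    _ ≤ _ := hS.sum_le_tsum hsupp

lemma inv_tsum_le_tprod_inv_one_add (hf : f.IsMultiplicative) (hS : Thin {n | f n ≠ 0}) :
    (∑' n : {n | f n ≠ 0}, (1 : ℝ) / n)⁻¹ ≤
      ∏' p : {p | p.Prime ∧ f p ≠ 0}, (1 + 1 / (p : ℝ))⁻¹ := by
  refine ge_of_tendsto' (hS.mono fun p hp => hp.2).multipliable_inv_one_add.hasProd fun u => ?_
  have hprod := prod_one_add_inv_le_tsum hf hS (T := u.map (Embedding.subtype _))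
    fun p hp => by obtain ⟨a, -, rfl⟩ := mem_map.mp hp; exact a.2
  rw [prod_map] at hprod
  rw [prod_inv_distrib]
  exact inv_anti₀ (prod_pos fun _ _ => by positivity) hprod

end SupportReciprocals

lemma tprod_mul_tprod_le_tprod_union {β : Type*} {s t : Set β} {F : β → ℝ}
    (hF0 : ∀ b, 0 ≤ F b) (hF1 : ∀ b, F b ≤ 1) (hs : Multipliable fun b : s => F b)
    (ht : Multipliable fun b : t => F b) (hst : Multipliable fun b : ↥(s ∪ t) => F b) :
    (∏' b : s, F b) * ∏' b : t, F b ≤ ∏' b : ↥(s ∪ t), F b := by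
  classical
  have hs' := hasProd_subtype_iff_mulIndicator.mp hs.hasProd
  have ht' := hasProd_subtype_iff_mulIndicator.mp ht.hasProd
  have hst' := hasProd_subtype_iff_mulIndicator.mp hst.hasProd
  refine le_of_tendsto_of_tendsto (hs'.mul ht') hst' (Eventually.of_forall fun u => ?_)
  refine prod_le_prod (fun b _ => ?_) fun b _ => ?_ <;>
    simp only [Set.mulIndicator_apply, Set.mem_union] <;> split_ifs <;>
    first | tauto | nlinarith [hF0 b, hF1 b]

lemma hasProd_one_sub_inv_sq_prime :
    HasProd (fun p : Nat.Primes => 1 - 1 / (p : ℝ) ^ 2) (6 / Real.pi ^ 2) := by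
  let χ : ℕ →*₀ ℝ :=
    { toFun := fun n => 1 / (n : ℝ) ^ 2
      map_zero' := by simp
      map_one' := by simp
      map_mul' := fun a b => by push_cast; ring }
  have hχ : ∀ n, χ n = 1 / (n : ℝ) ^ 2 := fun _ => rfl
  have hsum : Summable fun n => ‖χ n‖ := by
    simp only [hχ, norm_div, norm_one, norm_pow, Real.norm_natCast]
    exact Real.summable_one_div_nat_pow.mpr one_lt_two
  have h := EulerProduct.eulerProduct_completely_multiplicative_hasProd hsum
  rw [show ∑' n, χ n = Real.pi ^ 2 / 6 by simp_rw [hχ]; exact hasSum_zeta_two.tsum_eq] at h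
  have h' := h.inv₀ (by positivity)
  rw [inv_div] at h'
  simpa only [inv_inv, hχ] using h'

section Sieve

variable {B : Set ℕ}

open Classical in
/-- A number avoids `sieveModulus B p` for every prime `p` exactly when it is squarefree with no
prime factor in `B`. -/
noncomputable def sieveModulus (B : Set ℕ) (p : ℕ) : ℕ := if p ∈ B then p else p ^ 2

lemma sieveModulus_dvd_sq (B : Set ℕ) (p : ℕ) : sieveModulus B p ∣ p ^ 2 := by
  unfold sieveModulus; split_ifs
  · exact dvd_pow_self p two_ne_zero
  · exact dvd_rfl

lemma le_sieveModulus (B : Set ℕ) (p : ℕ) : p ≤ sieveModulus B p := by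
  unfold sieveModulus; split_ifs
  · exact le_rfl
  · exact Nat.le_self_pow two_ne_zero p

lemma one_div_sieveModulus_le (B : Set ℕ) (p : ℕ) :
    1 / (sieveModulus B p : ℝ) ≤ B.indicator (fun n : ℕ => (1 : ℝ) / n) p + 1 / (p : ℝ) ^ 2 := by
  unfold sieveModulus; split_ifs with hp
  · rw [Set.indicator_of_mem hp]; simp only [le_add_iff_nonneg_right]; positivity
  · rw [Set.indicator_of_notMem hp]; push_cast; rw [zero_add]

lemma one_sub_inv_sieveModulus {p : ℕ} (hp : p.Prime) :
    1 - 1 / (sieveModulus B p : ℝ) =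
      (1 - 1 / (p : ℝ) ^ 2) * B.mulIndicator (fun n : ℕ => (1 + 1 / (n : ℝ))⁻¹) p := by
  have hp' : (1 : ℝ) < p := by exact_mod_cast hp.one_lt
  unfold sieveModulus; split_ifs with hB
  · rw [Set.mulIndicator_of_mem hB]
    field_simp
    ring
  · rw [Set.mulIndicator_of_notMem hB, mul_one]; push_cast; rfl

lemma squarefree_of_forall_not_sieveModulus_dvd (hBp : ∀ p ∈ B, p.Prime) {n : ℕ}
    (h : ∀ p, p.Prime → ¬ sieveModulus B p ∣ n) : Squarefree n ∧ ∀ p ∈ B, ¬ p ∣ n := by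
  refine ⟨Nat.squarefree_iff_prime_squarefree.mpr fun p hp hpn => h p hp ?_, fun p hpB hpn => ?_⟩
  · exact (sieveModulus_dvd_sq B p).trans (by rwa [pow_two])
  · exact h p (hBp p hpB) (by rwa [sieveModulus, if_pos hpB])

lemma hasDensity_sifted (B : Set ℕ) (z : ℕ) :
    HasDensity {n | ∀ p ∈ z.primesBelow, ¬ sieveModulus B p ∣ n}
      (∏ p ∈ z.primesBelow, (1 - 1 / (sieveModulus B p : ℝ))) := by
  classical
  have hprime : ∀ p ∈ z.primesBelow, p.Prime := fun p hp => (Nat.mem_primesBelow.mp hp).2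
  convert hasDensity_forall_mem_of_coprime (fun p => p ^ 2) (fun p n => ¬ sieveModulus B p ∣ n)
    (fun p => periodic_not_dvd (sieveModulus_dvd_sq B p)) z.primesBelow
    (fun p hp => pow_pos (hprime p hp).pos 2) (pairwise_coprime_sq_of_prime hprime) using 1
  exact prod_congr rfl fun p hp =>
    (Nat.count_not_dvd_div (pow_pos (hprime p hp).pos 2) (sieveModulus_dvd_sq B p)).symm

lemma cnt_le_cnt_add_sum_div {A G : Set ℕ} {q : ℕ → ℕ} (N : ℕ) (U : Finset ℕ)
    (h : ∀ n ∈ A, 1 ≤ n → n ≤ N → n ∉ G → ∃ p ∈ U, q p ∣ n) :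
    cnt A N ≤ cnt G N + ∑ p ∈ U, N / q p := by
  classical
  rw [cnt_eq_card, cnt_eq_card]
  have hsub : {n ∈ Icc 1 N | n ∈ A} ⊆
      {n ∈ Icc 1 N | n ∈ G} ∪ U.biUnion fun p => {n ∈ Ioc 0 N | q p ∣ n} := by
    intro n hn
    rw [mem_filter, mem_Icc] at hn
    by_cases hG : n ∈ G
    · exact mem_union_left _ (mem_filter.mpr ⟨mem_Icc.mpr hn.1, hG⟩)
    · obtain ⟨p, hp, hpn⟩ := h n hn.2 hn.1.1 hn.1.2 hG
      exact mem_union_right _ (mem_biUnion.mpr ⟨p, hp, mem_filter.mpr ⟨mem_Ioc.mpr hn.1, hpn⟩⟩)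
  calc _ ≤ _ := card_le_card hsub
    _ ≤ _ := card_union_le _ _
    _ ≤ _ := add_le_add_right (card_biUnion_le.trans_eq
        (sum_congr rfl fun p _ => Nat.Ioc_filter_dvd_card_eq_div N (q p))) _

lemma cnt_sifted_le (hBp : ∀ p ∈ B, p.Prime) {G : Set ℕ}
    (hG : ∀ n, Squarefree n → (∀ p ∈ B, ¬ p ∣ n) → n ∈ G) (z N : ℕ) :
    cnt {n | ∀ p ∈ z.primesBelow, ¬ sieveModulus B p ∣ n} N ≤
      cnt G N + ∑ p ∈ {p ∈ Icc z N | p.Prime}, N / sieveModulus B p := by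
  refine cnt_le_cnt_add_sum_div N _ fun n hn h1 hN hnG => ?_
  by_contra! hall
  have hsq := squarefree_of_forall_not_sieveModulus_dvd hBp (n := n) fun p hp hpn => ?_
  · exact hnG (hG n hsq.1 hsq.2)
  rcases lt_or_ge p z with hpz | hpz
  · exact hn p (Nat.mem_primesBelow.mpr ⟨hpz, hp⟩) hpn
  · have := (le_sieveModulus B p).trans (Nat.le_of_dvd h1 hpn)
    exact hall p (mem_filter.mpr ⟨mem_Icc.mpr ⟨hpz, by omega⟩, hp⟩) hpn

lemma sum_Icc_le_tsum_nat_add {r : ℕ → ℝ} (hr : Summable r) (hr0 : ∀ n, 0 ≤ r n) (z N : ℕ) :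
    ∑ n ∈ Icc z N, r n ≤ ∑' k, r (k + z) := by
  rw [← Ico_add_one_right_eq_Icc, sum_Ico_eq_sum_range]
  simp_rw [add_comm z]
  exact ((summable_nat_add_iff z).mpr hr).sum_le_tsum _ fun k _ => hr0 _

lemma tendsto_prod_primesBelow_one_sub_inv_sieveModulus (hB : Thin B) (hBp : ∀ p ∈ B, p.Prime) :
    Tendsto (fun z : ℕ => ∏ p ∈ z.primesBelow, (1 - 1 / (sieveModulus B p : ℝ))) atTop
      (𝓝 (6 / Real.pi ^ 2 * ∏' p : B, (1 + 1 / (p : ℝ))⁻¹)) := by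
  classical
  have hV := (hasProd_subtype_iff_mulIndicator (s := {p : ℕ | p.Prime})
    (f := fun n : ℕ => 1 - 1 / (n : ℝ) ^ 2)).mp hasProd_one_sub_inv_sq_prime
  have hW := (hasProd_subtype_iff_mulIndicator (s := B)
    (f := fun n : ℕ => (1 + 1 / (n : ℝ))⁻¹)).mp hB.multipliable_inv_one_add.hasProd
  refine (hV.tendsto_prod_nat.mul hW.tendsto_prod_nat).congr fun z => ?_
  rw [← prod_mul_distrib, Nat.primesBelow, prod_filter]
  refine prod_congr rfl fun p _ => ?_
  by_cases hp : p.Prime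
  · rw [if_pos hp, Set.mulIndicator_of_mem (show p ∈ {p : ℕ | p.Prime} from hp),
      one_sub_inv_sieveModulus hp]
  · rw [if_neg hp, Set.mulIndicator_of_notMem (show p ∉ {p : ℕ | p.Prime} from hp),
      Set.mulIndicator_of_notMem fun h => hp (hBp p h), mul_one]

theorem six_div_pi_sq_mul_tprod_le (hB : Thin B) (hBp : ∀ p ∈ B, p.Prime) {G : Set ℕ} {dG : ℝ}
    (hG : ∀ n, Squarefree n → (∀ p ∈ B, ¬ p ∣ n) → n ∈ G) (hdG : HasDensity G dG) :
    6 / Real.pi ^ 2 * ∏' p : B, (1 + 1 / (p : ℝ))⁻¹ ≤ dG := by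
  -- `r p` dominates `1 / sieveModulus B p`, so its tails bound what the primes `≥ z` remove.
  set r : ℕ → ℝ := fun n => B.indicator (fun n : ℕ => (1 : ℝ) / n) n + 1 / (n : ℝ) ^ 2
  have hr0 : ∀ n, 0 ≤ r n := fun n =>
    add_nonneg (Set.indicator_nonneg (fun _ _ => by positivity) n) (by positivity)
  have hr : Summable r :=
    (thin_iff_summable_indicator.mp hB).add (Real.summable_one_div_nat_pow.mpr one_lt_two)
  have hz : ∀ z, ∏ p ∈ z.primesBelow, (1 - 1 / (sieveModulus B p : ℝ)) ≤
      dG + ∑' k, r (k + z) := fun z => (hasDensity_sifted B z).le_add_of_cnt_le hdG fun N => by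
    have hcnt : (cnt {n | ∀ p ∈ z.primesBelow, ¬ sieveModulus B p ∣ n} N : ℝ) ≤
        cnt G N + ∑ p ∈ {p ∈ Icc z N | p.Prime}, ((N / sieveModulus B p : ℕ) : ℝ) := by
      exact_mod_cast cnt_sifted_le hBp hG z N
    have herr : ∑ p ∈ {p ∈ Icc z N | p.Prime}, ((N / sieveModulus B p : ℕ) : ℝ) ≤
        (∑' k, r (k + z)) * N := calc
      _ ≤ ∑ p ∈ {p ∈ Icc z N | p.Prime}, (N : ℝ) * (1 / sieveModulus B p) :=
          sum_le_sum fun p _ => by rw [mul_one_div]; exact Nat.cast_div_le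
      _ ≤ ∑ p ∈ Icc z N, (N : ℝ) * r p :=
          (sum_le_sum fun p _ => mul_le_mul_of_nonneg_left (one_div_sieveModulus_le B p)
            (Nat.cast_nonneg N)).trans
          (sum_le_sum_of_subset_of_nonneg (filter_subset _ _) fun p _ _ =>
            mul_nonneg (Nat.cast_nonneg N) (hr0 p))
      _ ≤ _ := by rw [← mul_sum, mul_comm]; gcongr; exact sum_Icc_le_tsum_nat_add hr hr0 z N
    linarith
  simpa using le_of_tendsto_of_tendsto (tendsto_prod_primesBelow_one_sub_inv_sieveModulus hB hBp)
    (tendsto_const_nhds.add (tendsto_sum_nat_add r)) (Eventually.of_forall hz)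

end Sieve

section Convolution

variable {R : Type*} [CommSemiring R] {f ν : ArithmeticFunction R}

lemma ArithmeticFunction.IsMultiplicative.mul_apply_prime (hf : f.IsMultiplicative)
    (hν : ν.IsMultiplicative) {p : ℕ} (hp : p.Prime) : (f * ν) p = f p + ν p := by
  rw [mul_apply, Nat.sum_divisorsAntidiagonal (f := fun a b => f a * ν b), hp.divisors,
    sum_pair hp.one_lt.ne, Nat.div_one, Nat.div_self hp.pos, hf.map_one, hν.map_one, one_mul,
    mul_one, add_comm]

lemma ArithmeticFunction.IsMultiplicative.mul_apply_ne_zero_of_squarefree [NoZeroDivisors R]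
    [Nontrivial R] (hf : f.IsMultiplicative) (hν : ν.IsMultiplicative) {n : ℕ} (hn : Squarefree n)
    (hB : ∀ p ∈ {p | p.Prime ∧ ν p = 0} ∪ {p | p.Prime ∧ f p ≠ 0}, ¬ p ∣ n) : (f * ν) n ≠ 0 := by
  rw [← (hf.mul hν).prod_primeFactors hn, prod_ne_zero_iff]
  intro p hp
  have hpn := hB p
  simp only [Set.mem_union, Set.mem_ofPred_eq, Nat.prime_of_mem_primeFactors hp, true_and,
    Nat.dvd_of_mem_primeFactors hp, not_true_eq_false, imp_false, not_or, not_not] at hpn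
  rw [hf.mul_apply_prime hν (Nat.prime_of_mem_primeFactors hp), hpn.2, zero_add]
  exact hpn.1

end Convolution

theorem quantitative_bound_general
    (ν : ArithmeticFunction ℂ) (hν : ν.IsMultiplicative)
    (hdens : ∃ d : ℝ, 0 < d ∧ HasDensity {n : ℕ | ν n ≠ 0} d)
    (f g : ArithmeticFunction ℂ) (hfm : f.IsMultiplicative)
    (hg : g = f * ν)
    (dg : ℝ) (hdg : HasDensity {n : ℕ | g n ≠ 0} dg) :
    dg ≥ (6 / Real.pi ^ 2 *
        ∏' p : {p : ℕ // p.Prime ∧ ν p = 0}, (1 + 1 / ((p : ℕ) : ℝ))⁻¹) /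
      ∑' n : {n : ℕ | f n ≠ 0}, (1 : ℝ) / (n : ℕ) := by
  by_cases hS : Thin {n | f n ≠ 0}
  swap
  -- a divergent `tsum` is `0` and `x / 0 = 0`: this is the convention `C / ∞ = 0`
  · rw [tsum_eq_zero_of_not_summable hS, div_zero]
    exact hdg.nonneg
  obtain ⟨d, hd, hD⟩ := hdens
  set Sν : Set ℕ := {p | p.Prime ∧ ν p = 0}
  set Sf : Set ℕ := {p | p.Prime ∧ f p ≠ 0}
  set F := fun n : ℕ => (1 + 1 / (n : ℝ))⁻¹
  have hSν : Thin Sν := thin_setOf_prime_apply_eq_zero hν hd hD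
  have hSf : Thin Sf := hS.mono fun p hp => hp.2
  have hsieve : 6 / Real.pi ^ 2 * ∏' p : ↥(Sν ∪ Sf), F p ≤ dg :=
    six_div_pi_sq_mul_tprod_le (hSν.union hSf) (fun p hp => hp.elim And.left And.left)
      (fun n hn hB => hg ▸ hfm.mul_apply_ne_zero_of_squarefree hν hn hB) hdg
  have hunion : (∏' p : Sν, F p) * ∏' p : Sf, F p ≤ ∏' p : ↥(Sν ∪ Sf), F p :=
    tprod_mul_tprod_le_tprod_union (fun _ => by positivity)
      (fun _ => inv_le_one_of_one_le₀ (le_add_of_nonneg_right (by positivity)))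
      hSν.multipliable_inv_one_add hSf.multipliable_inv_one_add
      (hSν.union hSf).multipliable_inv_one_add
  calc (6 / Real.pi ^ 2 * ∏' p : Sν, F p) / ∑' n : {n : ℕ | f n ≠ 0}, (1 : ℝ) / (n : ℕ)
      ≤ 6 / Real.pi ^ 2 * ((∏' p : Sν, F p) * ∏' p : Sf, F p) := by
        rw [mul_div_assoc, div_eq_mul_inv (∏' p : Sν, F p)]
        gcongr
        · exact tprod_nonneg fun _ => by positivity
        · exact inv_tsum_le_tprod_inv_one_add hfm hS
    _ ≤ dg := (mul_le_mul_of_nonneg_left hunion (by positivity)).trans hsieve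

theorem quantitative_bound
    (ν : ArithmeticFunction ℂ) (hν : ν.IsMultiplicative)
    (hdens : ∃ d : ℝ, 0 < d ∧ HasDensity {n : ℕ | ν n ≠ 0} d)
    (f g : ArithmeticFunction ℂ) (hfm : f.IsMultiplicative) (hgm : g.IsMultiplicative)
    (hg : g = f * ν)
    (dg : ℝ) (hdg : HasDensity {n : ℕ | g n ≠ 0} dg) :
    dg ≥ (6 / Real.pi ^ 2 *
        ∏' p : {p : ℕ // p.Prime ∧ ν p = 0}, (1 + 1 / ((p : ℕ) : ℝ))⁻¹) /
      ∑' n : {n : ℕ | f n ≠ 0}, (1 : ℝ) / (n : ℕ) :=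
  quantitative_bound_general ν hν hdens f g hfm hg dg hdg
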